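/- The safety-filtered map u_safe(x) = u_r(x) if d(x) ≥ 0, and u_safe(x) = u_r(x) − (d(x)/‖b(x)‖²)·b(x) if d(x) < 0, is Lipschitz continuous on a compact set C, provided u_r, d, and b are Lipschitz on C, |d| ≤ M_d on C, and ‖b(x)‖ ≥ m_b > 0 on C. Its Lipschitz constant is bounded by L_{u_r} + L_d/m_b + M_d·L_b/m_b². -/

import Mathlib

/-- Exact distance formula for the inversion `v ↦ v/‖v‖²` in a real inner product space. -/
lemma inv_sq_smul_dist {E : Type*} [NormedAddCommGroup E] [InnerProductSpace ℝ E]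
    (v w : E) (hv : v ≠ 0) (hw : w ≠ 0) :
    ‖(‖v‖^2)⁻¹ • v - (‖w‖^2)⁻¹ • w‖ = ‖v - w‖ / (‖v‖ * ‖w‖) := by
  have := EuclideanGeometry.dist_inversion_inversion (c := (0:E)) (x := v) (y := w) hv hw 1
  simp [EuclideanGeometry.inversion, dist_eq_norm, div_pow, one_div] at this
  rw [this]; ring

lemma abs_min_zero_sub (a c : ℝ) : |min a 0 - min c 0| ≤ |a - c| := by
  rcases le_total a 0 with h1 | h1 <;> rcases le_total c 0 with h2 | h2 <;>
    simp [min_eq_left, min_eq_right, *] <;> cases abs_cases (a - c) <;>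
    cases abs_cases a <;> cases abs_cases c <;> linarith

/-- The safety-filtered control `u_safe(x) = u_r(x)` if `d(x) ≥ 0`, and
`u_r(x) − (d(x)/‖b(x)‖²)·b(x)` otherwise, is Lipschitz on a compact set `C` with constant
bounded by `L_{u_r} + L_d/m_b + M_d·L_b/m_b²`. -/
theorem safety_filter_lipschitz
    {n q : ℕ} (C : Set (EuclideanSpace ℝ (Fin n))) (hC : IsCompact C)
    (ur : EuclideanSpace ℝ (Fin n) → EuclideanSpace ℝ (Fin q))
    (d : EuclideanSpace ℝ (Fin n) → ℝ)
    (b : EuclideanSpace ℝ (Fin n) → EuclideanSpace ℝ (Fin q))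
    (Lur Ld Lb Md mb : ℝ) (hmb : 0 < mb)
    (hur : ∀ x ∈ C, ∀ y ∈ C, ‖ur x - ur y‖ ≤ Lur * ‖x - y‖)
    (hd : ∀ x ∈ C, ∀ y ∈ C, |d x - d y| ≤ Ld * ‖x - y‖)
    (hb : ∀ x ∈ C, ∀ y ∈ C, ‖b x - b y‖ ≤ Lb * ‖x - y‖)
    (hMd : ∀ x ∈ C, |d x| ≤ Md)
    (hmb' : ∀ x ∈ C, mb ≤ ‖b x‖)
    (usafe : EuclideanSpace ℝ (Fin n) → EuclideanSpace ℝ (Fin q))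
    (husafe : ∀ x, usafe x = if 0 ≤ d x then ur x else ur x - (d x / ‖b x‖ ^ 2) • b x) :
    ∀ x ∈ C, ∀ y ∈ C,
      ‖usafe x - usafe y‖ ≤ (Lur + Ld / mb + Md * Lb / mb ^ 2) * ‖x - y‖ := by
  intro x hx y hy
  rcases eq_or_ne x y with rfl | hxy
  · simp
  have hnorm : 0 < ‖x - y‖ := by simpa [sub_eq_zero] using hxy
  -- nonzeroness of b on C
  have hbne : ∀ z ∈ C, b z ≠ 0 := fun z hz h0 => by
    have := hmb' z hz; rw [h0, norm_zero] at this; linarith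
  -- define pieces
  set w : EuclideanSpace ℝ (Fin n) → EuclideanSpace ℝ (Fin q) :=
    fun z => (‖b z‖ ^ 2)⁻¹ • b z with hw
  set D : EuclideanSpace ℝ (Fin n) → ℝ := fun z => min (d z) 0 with hD
  have hrw : ∀ z, usafe z = ur z - D z • w z := by
    intro z
    rw [husafe z]
    split_ifs with h
    · simp [hD, min_eq_right h]
    · push_neg at h
      simp [hD, min_eq_left h.le, hw, div_eq_mul_inv, mul_smul]
  -- norms of w
  have hwnorm : ∀ z ∈ C, ‖w z‖ ≤ mb⁻¹ := by
    intro z hz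
    have h1 : 0 < ‖b z‖ := lt_of_lt_of_le hmb (hmb' z hz)
    have : ‖w z‖ = ‖b z‖⁻¹ := by
      rw [hw, norm_smul, norm_inv, norm_pow, norm_norm, sq]
      field_simp
    rw [this]
    exact inv_anti₀ hmb (hmb' z hz)
  have hLb : 0 ≤ Lb := by
    nlinarith [hb x hx y hy, norm_nonneg (b x - b y)]
  have hwdist : ‖w x - w y‖ ≤ Lb * ‖x - y‖ / (mb * mb) := by
    rw [hw]
    rw [inv_sq_smul_dist (b x) (b y) (hbne x hx) (hbne y hy)]
    have h1 : mb * mb ≤ ‖b x‖ * ‖b y‖ :=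
      mul_le_mul (hmb' x hx) (hmb' y hy) hmb.le (le_trans hmb.le (hmb' x hx))
    have h2 : ‖b x - b y‖ ≤ Lb * ‖x - y‖ := hb x hx y hy
    have h3 : (0:ℝ) < mb * mb := mul_pos hmb hmb
    exact div_le_div₀ (by positivity) h2 h3 h1
  -- constants nonneg
  have hLd : 0 ≤ Ld := by
    nlinarith [hd x hx y hy, abs_nonneg (d x - d y)]
  have hMd0 : 0 ≤ Md := le_trans (abs_nonneg _) (hMd x hx)
  have hDy : |D y| ≤ Md := by
    have : |D y| ≤ |d y| := by
      rcases le_total (d y) 0 with h | h <;> simp [hD, min_eq_left, min_eq_right, h, abs_nonpos_iff] <;>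
        cases abs_cases (d y) <;> linarith [abs_nonneg (d y)]
    exact le_trans this (hMd y hy)
  -- main estimate
  have key : D x • w x - D y • w y = (D x - D y) • w x + D y • (w x - w y) := by
    rw [sub_smul, smul_sub]; abel
  have hA : ‖(D x - D y) • w x‖ ≤ (Ld * ‖x - y‖) * mb⁻¹ := by
    have h1 : ‖(D x - D y) • w x‖ = |D x - D y| * ‖w x‖ := by
      rw [norm_smul, Real.norm_eq_abs]
    rw [h1]
    exact mul_le_mul (le_trans (abs_min_zero_sub _ _) (hd x hx y hy))
      (hwnorm x hx) (norm_nonneg _) (by positivity)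
  have hB : ‖D y • (w x - w y)‖ ≤ Md * (Lb * ‖x - y‖ / (mb * mb)) := by
    have h1 : ‖D y • (w x - w y)‖ = |D y| * ‖w x - w y‖ := by
      rw [norm_smul, Real.norm_eq_abs]
    rw [h1]
    exact mul_le_mul hDy hwdist (norm_nonneg _) hMd0
  calc ‖usafe x - usafe y‖
      = ‖(ur x - ur y) - (D x • w x - D y • w y)‖ := by
        rw [hrw x, hrw y]; congr 1; abel
    _ ≤ ‖ur x - ur y‖ + ‖D x • w x - D y • w y‖ := norm_sub_le _ _
    _ ≤ ‖ur x - ur y‖ + (‖(D x - D y) • w x‖ + ‖D y • (w x - w y)‖) := by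
        rw [key]; exact add_le_add le_rfl (norm_add_le _ _)
    _ ≤ Lur * ‖x - y‖ + ((Ld * ‖x - y‖) * mb⁻¹ + Md * (Lb * ‖x - y‖ / (mb * mb))) :=
        add_le_add (hur x hx y hy) (add_le_add hA hB)
    _ = (Lur + Ld / mb + Md * Lb / mb ^ 2) * ‖x - y‖ := by
        field_simp; ring
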